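/- Forward direction of the Partition reduction: fix f ∈ (0,1), positive reals a_1, …, a_n with t = (1/2)·Σ_i a_i and a_i ≤ t for all i, and consider the constant product CFMM F_y(x) = k/x with initial state s0 = (x0, y0), x0 = (1−f)t/(1−√(1−f)), y0 = k/x0, and prices with r(x0) = p_x/p_y (so that x0 − L_x = (1−f)t). Let the users' transactions be TX^i = Sell(X, a_i) for i ∈ [n] and TX^{n+1} = TX^{n+2} = Sell(Y, q*) with q* large enough that F_x(y0 + (1−f)q*) < L_x. If there exists S ⊆ [n] with Σ_{i∈S} a_i = t, then the sequence consisting of: TX^{n+1}; the miner's transaction Sell(X, (L_x − F_x(y0 + (1−f)q*))/(1−f)); the transactions TX^i for i ∈ S (in any order); TX^{n+2}; and the miner's transaction Sell(X, (L_x − F_x(y0 + (1−f)q*))/(1−f)) again, satisfies the greedy sequencing rule and yields miner total profit exactly 2·AP(s0, Sell(Y, q*)) = M(s0, {TX^i}_{i∈[n+2]}). -/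

import Mathlib

/-
Each `Sell(Y, q*)` pushes the `X`-reserve down to `x1 < Lx`, and the miner's back-run
`Sell(X, (Lx - x1)/(1 - f))` restores it to `Lx`; the profit of that back-run is exactly
`AP(s0, Sell(Y, q*))`. Because `x0 - Lx = (1 - f) t`, the users' sales indexed by a half `S` of
the partition carry the state from `Lx` back to `x0`, so the second `Sell(Y, q*)` and its back-run
repeat the first pair, and no `Sell(X, ·)` ever starts above `x0` (greedy sequencing rule).
The users' `Sell(X, a_i)` carry no arbitrage value: `x0 + (1 - f) a_i ≤ Rx = x0 / √(1 - f)`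
since `a_i ≤ t`. Hence both the miner's profit and `M` equal `2 AP(s0, Sell(Y, q*))`.
-/

/-- A transaction in the two-token CFMM: sell `q` units of token X or of token Y. -/
inductive Tx where
  | sellX (q : ℝ)
  | sellY (q : ℝ)

namespace Tx

/-- The transaction is of type `Sell(X, ·)`. -/
def isSellX : Tx → Prop
  | sellX _ => True
  | sellY _ => False

/-- The transaction is of type `Sell(Y, ·)`. -/
def isSellY : Tx → Prop
  | sellX _ => False
  | sellY _ => True

end Tx

/-- Executing a transaction at the state `(x, Fy x)` with fee fraction `f`:
the new `X`-reserve. -/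
noncomputable def step (Fy Fx : ℝ → ℝ) (f : ℝ) (x : ℝ) : Tx → ℝ
  | Tx.sellX q => x + (1 - f) * q
  | Tx.sellY q => Fx (Fy x + (1 - f) * q)

/-- Profit that a miner gains by executing one transaction at state `(x, Fy x)`. -/
noncomputable def txProfit (Fy Fx : ℝ → ℝ) (f px py : ℝ) (x : ℝ) : Tx → ℝ
  | Tx.sellX q => (Fy x - Fy (x + (1 - f) * q)) * py - q * px
  | Tx.sellY q => (x - Fx (Fy x + (1 - f) * q)) * px - q * py

/-- Miner's total profit along a tagged sequence (`true` = miner's transaction). -/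
noncomputable def minerProfit (Fy Fx : ℝ → ℝ) (f px py : ℝ) : ℝ → List (Tx × Bool) → ℝ
  | _, [] => 0
  | x, t :: rest =>
      (if t.2 then txProfit Fy Fx f px py x t.1 else 0) +
        minerProfit Fy Fx f px py (step Fy Fx f x t.1) rest

/-- The greedy sequencing rule for a tagged sequence with benchmark state `(x0, y0)`. -/
def GSR (Fy Fx : ℝ → ℝ) (f x0 y0 : ℝ) : ℝ → List (Tx × Bool) → Prop
  | _, [] => True
  | x, (Tx.sellX q, _) :: rest =>
      (x ≤ x0 ∨ ∀ t ∈ rest, (t : Tx × Bool).1.isSellX) ∧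
        GSR Fy Fx f x0 y0 (x + (1 - f) * q) rest
  | x, (Tx.sellY q, _) :: rest =>
      (Fy x ≤ y0 ∨ ∀ t ∈ rest, (t : Tx × Bool).1.isSellY) ∧
        GSR Fy Fx f x0 y0 (Fx (Fy x + (1 - f) * q)) rest

/-- Arbitragable profit of a transaction at the initial state `(x0, Fy x0)`. -/
noncomputable def AP (Fy Fx : ℝ → ℝ) (f px py Lx Rx x0 : ℝ) : Tx → ℝ
  | Tx.sellX q =>
      (max (x0 + (1 - f) * q) Rx - Rx) * px -
        ((Fy Rx - Fy (max (x0 + (1 - f) * q) Rx)) / (1 - f)) * py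
  | Tx.sellY q =>
      (Fy (min (Fx (Fy x0 + (1 - f) * q)) Lx) - Fy Lx) * py -
        ((Lx - min (Fx (Fy x0 + (1 - f) * q)) Lx) / (1 - f)) * px


lemma minerProfit_map_sellX_append (Fy Fx : ℝ → ℝ) (f px py : ℝ) (bs : List ℝ) (x : ℝ)
    (rest : List (Tx × Bool)) :
    minerProfit Fy Fx f px py x ((bs.map fun b => (Tx.sellX b, false)) ++ rest) =
      minerProfit Fy Fx f px py (x + (1 - f) * bs.sum) rest := by
  induction bs generalizing x with
  | nil => simp
  | cons b bs ih =>
    simp only [List.map_cons, List.cons_append, minerProfit, Bool.false_eq_true, if_false,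
      zero_add, step, ih, List.sum_cons]
    ring_nf

lemma GSR_map_sellX_append (Fy Fx : ℝ → ℝ) {f : ℝ} (hf : f ≤ 1) (x0 y0 : ℝ) {bs : List ℝ}
    {x : ℝ} {rest : List (Tx × Bool)} (hbs : ∀ b ∈ bs, 0 ≤ b) (hle : x + (1 - f) * bs.sum ≤ x0)
    (hrest : GSR Fy Fx f x0 y0 (x + (1 - f) * bs.sum) rest) :
    GSR Fy Fx f x0 y0 x ((bs.map fun b => (Tx.sellX b, false)) ++ rest) := by
  induction bs generalizing x with
  | nil => simpa using hrest
  | cons b bs ih =>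
    simp only [List.forall_mem_cons] at hbs
    have hshift : x + (1 - f) * b + (1 - f) * bs.sum = x + (1 - f) * (b :: bs).sum := by
      rw [List.sum_cons]; ring
    have hsum : 0 ≤ (1 - f) * bs.sum := mul_nonneg (by linarith) (List.sum_nonneg hbs.2)
    refine ⟨Or.inl ?_, ih hbs.2 (hshift ▸ hle) (hshift ▸ hrest)⟩
    rw [← hshift] at hle
    nlinarith [mul_nonneg (sub_nonneg.2 hf) hbs.1]

lemma AP_sellX_eq_zero (Fy Fx : ℝ → ℝ) (f px py Lx : ℝ) {Rx x0 q : ℝ}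
    (h : x0 + (1 - f) * q ≤ Rx) : AP Fy Fx f px py Lx Rx x0 (Tx.sellX q) = 0 := by
  simp [AP, max_eq_right h]

lemma AP_sellY_eq_txProfit_backrun (Fy Fx : ℝ → ℝ) {f : ℝ} (hf : f ≠ 1) (px py Lx Rx : ℝ)
    {x0 x1 q : ℝ} (hx1 : Fx (Fy x0 + (1 - f) * q) = x1) (h : x1 ≤ Lx) :
    AP Fy Fx f px py Lx Rx x0 (Tx.sellY q) =
      txProfit Fy Fx f px py x1 (Tx.sellX ((Lx - x1) / (1 - f))) := by
  have h1f : 1 - f ≠ 0 := sub_ne_zero.2 hf.symm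
  simp only [AP, txProfit, hx1, min_eq_left h, mul_div_cancel₀ _ h1f, add_sub_cancel]

lemma sq_eq_mul_sq_of_div_sq_eq {k c L x : ℝ} (hk : k ≠ 0) (hL : L ≠ 0)
    (h : k / L ^ 2 = c * (k / x ^ 2)) : x ^ 2 = c * L ^ 2 := by
  have hx : x ≠ 0 := by
    rintro rfl
    simp [hk, hL] at h
  field_simp at h
  linear_combination h

section Sandwich

variable (Fy Fx : ℝ → ℝ) {f x0 x1 q qm : ℝ} (bs : List ℝ)

def sandwich (q qm : ℝ) : List (Tx × Bool) :=
  (Tx.sellY q, false) :: (Tx.sellX qm, true) :: (bs.map fun b => (Tx.sellX b, false)) ++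
    [(Tx.sellY q, false), (Tx.sellX qm, true)]

variable (hx1 : Fx (Fy x0 + (1 - f) * q) = x1)
  (hcycle : x1 + (1 - f) * qm + (1 - f) * bs.sum = x0)
include hx1 hcycle

lemma minerProfit_sandwich (px py : ℝ) :
    minerProfit Fy Fx f px py x0 (sandwich bs q qm) =
      2 * txProfit Fy Fx f px py x1 (Tx.sellX qm) := by
  simp only [sandwich, List.cons_append, minerProfit, step, minerProfit_map_sellX_append, hx1,
    hcycle, Bool.false_eq_true, if_false, if_true]
  ring

lemma GSR_sandwich (hf : f ≤ 1) (y0 : ℝ) (hy0 : Fy x0 ≤ y0) (hx1_le : x1 ≤ x0)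
    (hbs : ∀ b ∈ bs, 0 ≤ b) : GSR Fy Fx f x0 y0 x0 (sandwich bs q qm) := by
  simp only [sandwich, List.cons_append, GSR, hx1, hy0, hx1_le, true_or, true_and]
  exact GSR_map_sellX_append Fy Fx hf x0 y0 hbs hcycle.le
    (by simp only [hcycle, GSR, hy0, hx1, hx1_le, true_or, true_and])

end Sandwich

section PartitionInstance

variable {f t x0 : ℝ}

lemma sqrt_one_sub_lt_one (hf0 : 0 < f) : √(1 - f) < 1 :=
  (Real.sqrt_lt' one_pos).2 (by linarith)

lemma x0_mul_one_sub_sqrt (hf0 : 0 < f) (hx0 : x0 = (1 - f) * t / (1 - √(1 - f))) :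
    x0 * (1 - √(1 - f)) = (1 - f) * t := by
  have hg := sqrt_one_sub_lt_one hf0
  rw [hx0, div_mul_cancel₀ _ (by linarith)]

lemma x0_nonneg (hf0 : 0 < f) (hf1 : f < 1) (ht : 0 ≤ t)
    (hx0 : x0 = (1 - f) * t / (1 - √(1 - f))) : 0 ≤ x0 := by
  have hg := sqrt_one_sub_lt_one hf0
  rw [hx0]
  exact div_nonneg (mul_nonneg (by linarith) ht) (by linarith)

variable {k ρ : ℝ} (hf0 : 0 < f) (hf1 : f < 1) (hk : k ≠ 0) (ht : 0 ≤ t)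
  (hx0 : x0 = (1 - f) * t / (1 - √(1 - f))) (hprice : k / x0 ^ 2 = ρ)
include hf0 hf1 hk ht hx0 hprice

-- `Lx = √(1 - f) x0`, and `x0` was chosen so that `(1 - √(1 - f)) x0 = (1 - f) t`.
lemma Lx_add_mul_eq_x0 {Lx : ℝ} (hLx_pos : 0 < Lx) (hLx : k / Lx ^ 2 = 1 / (1 - f) * ρ) :
    Lx + (1 - f) * t = x0 := by
  have h1f : 1 - f ≠ 0 := by linarith
  have hsq : x0 ^ 2 = 1 / (1 - f) * Lx ^ 2 :=
    sq_eq_mul_sq_of_div_sq_eq hk hLx_pos.ne' (hprice ▸ hLx)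
  have hLx_eq : Lx = √(1 - f) * x0 := by
    refine (pow_left_inj₀ hLx_pos.le (by positivity [x0_nonneg hf0 hf1 ht hx0])
      two_ne_zero).1 ?_
    rw [mul_pow, Real.sq_sqrt (by linarith), hsq]
    field_simp
  linear_combination hLx_eq - x0_mul_one_sub_sqrt hf0 hx0

-- `√(1 - f) Rx = x0`, so a sale of `a ≤ t` stays below `Rx` because `√(1 - f) a ≤ t`.
lemma x0_add_mul_le_Rx {Rx a : ℝ} (hRx_pos : 0 < Rx) (hRx : k / Rx ^ 2 = (1 - f) * ρ)
    (ha0 : 0 ≤ a) (ha : a ≤ t) : x0 + (1 - f) * a ≤ Rx := by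
  set g := √(1 - f) with hg_def
  have hg0 : 0 < g := Real.sqrt_pos.2 (by linarith)
  have hg1 : g < 1 := sqrt_one_sub_lt_one hf0
  have hg2 : g ^ 2 = 1 - f := Real.sq_sqrt (by linarith)
  have hsq : x0 ^ 2 = (1 - f) * Rx ^ 2 := sq_eq_mul_sq_of_div_sq_eq hk hRx_pos.ne' (hprice ▸ hRx)
  have hgRx : g * Rx = x0 := by
    refine (pow_left_inj₀ (by positivity) (x0_nonneg hf0 hf1 ht hx0) two_ne_zero).1 ?_
    rw [mul_pow, hg2, hsq]
  have hkey := x0_mul_one_sub_sqrt hf0 hx0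
  rw [← hg_def, ← hg2] at hkey
  have hga : g * a ≤ t := by nlinarith
  refine le_of_mul_le_mul_left ?_ hg0
  rw [← hgRx, ← hg2]
  nlinarith

end PartitionInstance

theorem partition_reduction_forward_general
    (f k px py t x0 y0 Lx Rx qstar : ℝ) (n : ℕ) (a : Fin n → ℝ)
    (hf0 : 0 < f) (hf1 : f < 1)
    (hk : 0 < k)
    (ha_pos : ∀ i, 0 < a i)
    (ha_le : ∀ i, a i ≤ t)
    (hx0 : x0 = (1 - f) * t / (1 - Real.sqrt (1 - f)))
    (hy0 : y0 = k / x0)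
    (hprice : k / x0 ^ 2 = px / py)
    (hLx_pos : 0 < Lx) (hLx : k / Lx ^ 2 = (1 / (1 - f)) * (px / py))
    (hRx_pos : 0 < Rx) (hRx : k / Rx ^ 2 = (1 - f) * (px / py))
    (hqstar : k / (y0 + (1 - f) * qstar) < Lx)
    -- a subset of `[n]` (as a duplicate-free list, fixing an arbitrary order)
    (l : List (Fin n)) (hl_sum : (l.map a).sum = t) :
    GSR (fun x => k / x) (fun y => k / y) f x0 y0 x0
        ((Tx.sellY qstar, false) ::
          (Tx.sellX ((Lx - k / (y0 + (1 - f) * qstar)) / (1 - f)), true) ::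
          (l.map fun i => (Tx.sellX (a i), false)) ++
          [(Tx.sellY qstar, false),
            (Tx.sellX ((Lx - k / (y0 + (1 - f) * qstar)) / (1 - f)), true)]) ∧
      minerProfit (fun x => k / x) (fun y => k / y) f px py x0
        ((Tx.sellY qstar, false) ::
          (Tx.sellX ((Lx - k / (y0 + (1 - f) * qstar)) / (1 - f)), true) ::
          (l.map fun i => (Tx.sellX (a i), false)) ++
          [(Tx.sellY qstar, false),
            (Tx.sellX ((Lx - k / (y0 + (1 - f) * qstar)) / (1 - f)), true)]) =
        2 * AP (fun x => k / x) (fun y => k / y) f px py Lx Rx x0 (Tx.sellY qstar) ∧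
      ((List.ofFn (fun i => Tx.sellX (a i)) ++ [Tx.sellY qstar, Tx.sellY qstar]).map
          (AP (fun x => k / x) (fun y => k / y) f px py Lx Rx x0)).sum =
        2 * AP (fun x => k / x) (fun y => k / y) f px py Lx Rx x0 (Tx.sellY qstar) := by
  have ha_nonneg : ∀ b ∈ l.map a, 0 ≤ b := by
    simp only [List.mem_map]
    rintro _ ⟨i, -, rfl⟩
    exact (ha_pos i).le
  have ht0 : 0 ≤ t := hl_sum ▸ List.sum_nonneg ha_nonneg
  have hLx_t : Lx + (1 - f) * t = x0 := Lx_add_mul_eq_x0 hf0 hf1 hk.ne' ht0 hx0 hprice hLx_pos hLx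
  have hk_x0 : k / x0 = y0 := hy0.symm
  set x1 := k / (y0 + (1 - f) * qstar)
  have hx1 : (fun y => k / y) ((fun x => k / x) x0 + (1 - f) * qstar) = x1 := by
    simp only [hk_x0, x1]
  have hcycle : x1 + (1 - f) * ((Lx - x1) / (1 - f)) + (1 - f) * (l.map a).sum = x0 := by
    rw [mul_div_cancel₀ _ (sub_pos.2 hf1).ne', hl_sum, ← hLx_t]
    ring
  have hmap : (l.map fun i => (Tx.sellX (a i), false)) =
      (l.map a).map fun b => (Tx.sellX b, false) := by
    rw [List.map_map]; rfl
  have hAP_sellX (i : Fin n) :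
      AP (fun x => k / x) (fun y => k / y) f px py Lx Rx x0 (Tx.sellX (a i)) = 0 :=
    AP_sellX_eq_zero _ _ _ _ _ _
      (x0_add_mul_le_Rx hf0 hf1 hk.ne' ht0 hx0 hprice hRx_pos hRx (ha_pos i).le (ha_le i))
  have hx1_le : x1 ≤ x0 :=
    hqstar.le.trans (hLx_t ▸ le_add_of_nonneg_right (mul_nonneg (by linarith) ht0))
  have hAP_sellY := AP_sellY_eq_txProfit_backrun _ _ hf1.ne px py Lx Rx hx1 hqstar.le
  rw [hmap]
  refine ⟨GSR_sandwich _ _ _ hx1 hcycle hf1.le y0 hk_x0.le hx1_le ha_nonneg,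
    hAP_sellY ▸ minerProfit_sandwich _ _ _ hx1 hcycle px py, ?_⟩
  simp only [List.map_append, List.map_ofFn, List.sum_append, List.sum_ofFn, Function.comp_def,
    hAP_sellX, Finset.sum_const_zero, List.map_cons, List.map_nil, List.sum_cons, List.sum_nil]
  ring

/-- **forward direction of the Partition reduction.**
Fix `f ∈ (0,1)` and positive reals `a_1, …, a_n` with `t = (1/2)·Σ_i a_i` and `a_i ≤ t`,
and consider the constant product CFMM `F_y(x) = k/x` with initial state `s0 = (x0, y0)`,
`x0 = (1−f)t/(1−√(1−f))`, `y0 = k/x0`, and prices with `r(x0) = p_x/p_y` (so that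
`x0 − L_x = (1−f)t`). The users' transactions are `Sell(X, a_i)` for `i ∈ [n]` and two
copies of `Sell(Y, q*)` with `q*` large enough that `F_x(y0 + (1−f)q*) < L_x`. If there is
`S ⊆ [n]` with `Σ_{i∈S} a_i = t` (here: a duplicate-free list `l` of indices whose amounts
sum to `t`), then the sequence `TX^{n+1}`; miner's `Sell(X, (L_x − F_x(y0+(1−f)q*))/(1−f))`;
the `TX^i`, `i ∈ S` (in any order); `TX^{n+2}`; the same miner transaction again —
satisfies the greedy sequencing rule and yields miner total profit exactly
`2·AP(s0, Sell(Y,q*)) = M(s0, {TX^i}_{i∈[n+2]})`. -/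
theorem partition_reduction_forward
    (f k px py t x0 y0 Lx Rx qstar : ℝ) (n : ℕ) (a : Fin n → ℝ)
    (hf0 : 0 < f) (hf1 : f < 1)
    (hk : 0 < k)
    (hpx : 0 < px) (hpy : 0 < py)
    (ha_pos : ∀ i, 0 < a i)
    (ht : t = (1 / 2) * ∑ i, a i)
    (ha_le : ∀ i, a i ≤ t)
    (hx0 : x0 = (1 - f) * t / (1 - Real.sqrt (1 - f)))
    (hy0 : y0 = k / x0)
    (hprice : k / x0 ^ 2 = px / py)
    (hLx_pos : 0 < Lx) (hLx : k / Lx ^ 2 = (1 / (1 - f)) * (px / py))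
    (hRx_pos : 0 < Rx) (hRx : k / Rx ^ 2 = (1 - f) * (px / py))
    (hqstar_nonneg : 0 ≤ qstar)
    (hqstar : k / (y0 + (1 - f) * qstar) < Lx)
    -- a subset of `[n]` (as a duplicate-free list, fixing an arbitrary order)
    (l : List (Fin n)) (hl_nodup : l.Nodup) (hl_sum : (l.map a).sum = t) :
    GSR (fun x => k / x) (fun y => k / y) f x0 y0 x0
        ((Tx.sellY qstar, false) ::
          (Tx.sellX ((Lx - k / (y0 + (1 - f) * qstar)) / (1 - f)), true) ::
          (l.map fun i => (Tx.sellX (a i), false)) ++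
          [(Tx.sellY qstar, false),
            (Tx.sellX ((Lx - k / (y0 + (1 - f) * qstar)) / (1 - f)), true)]) ∧
      minerProfit (fun x => k / x) (fun y => k / y) f px py x0
        ((Tx.sellY qstar, false) ::
          (Tx.sellX ((Lx - k / (y0 + (1 - f) * qstar)) / (1 - f)), true) ::
          (l.map fun i => (Tx.sellX (a i), false)) ++
          [(Tx.sellY qstar, false),
            (Tx.sellX ((Lx - k / (y0 + (1 - f) * qstar)) / (1 - f)), true)]) =
        2 * AP (fun x => k / x) (fun y => k / y) f px py Lx Rx x0 (Tx.sellY qstar) ∧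
      ((List.ofFn (fun i => Tx.sellX (a i)) ++ [Tx.sellY qstar, Tx.sellY qstar]).map
          (AP (fun x => k / x) (fun y => k / y) f px py Lx Rx x0)).sum =
        2 * AP (fun x => k / x) (fun y => k / y) f px py Lx Rx x0 (Tx.sellY qstar) :=
  partition_reduction_forward_general f k px py t x0 y0 Lx Rx qstar n a hf0 hf1 hk ha_pos ha_le hx0
    hy0 hprice hLx_pos hLx hRx_pos hRx hqstar l hl_sum
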